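/- arXiv:2110.00391 — 7 statements merged into one kernel-verified Lean document; each statement's English description precedes it below -/
import Mathlib

section
/- If f is monotone, then its multilinear extension F is monotone in the componentwise order: for all x, y ∈ [0,1]^E with x_e ≤ y_e for every e ∈ E, one has F(x) ≤ F(y). -/
open Finset

/-- The multilinear extension `F` of a set function `f : 2^E → ℝ`:
`F(x) = Σ_{S ⊆ E} (Π_{e∈S} x_e)(Π_{e∉S} (1 − x_e)) · f(S)`. -/
noncomputable def mle {E : Type*} [Fintype E] [DecidableEq E]
    (f : Finset E → ℝ) (x : E → ℝ) : ℝ :=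
  ∑ S : Finset E, (∏ e ∈ S, x e) * (∏ e ∈ Sᶜ, (1 - x e)) * f S

/-- The discrete derivative `∇_e F(x) = F(x_{-e},1) − F(x_{-e},0)`. -/
noncomputable def mleGrad {E : Type*} [Fintype E] [DecidableEq E]
    (f : Finset E → ℝ) (x : E → ℝ) (e : E) : ℝ :=
  mle f (Function.update x e 1) - mle f (Function.update x e 0)

/-- The characteristic vector `1_S` of a subset `S ⊆ E`. -/
def indic {E : Type*} [DecidableEq E] (S : Finset E) : E → ℝ :=
  fun e => if e ∈ S then 1 else 0

/-- Splitting a sum over all subsets according to membership of `e`. -/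
lemma mle_sum_split {E : Type*} [Fintype E] [DecidableEq E] (e : E) (t : Finset E → ℝ) :
    ∑ S : Finset E, t S
      = ∑ S ∈ univ.filter (fun S : Finset E => e ∉ S), (t S + t (insert e S)) := by
  rw [Finset.sum_add_distrib,
    ← Finset.sum_filter_add_sum_filter_not univ (fun S : Finset E => e ∉ S) t]
  congr 1
  refine Finset.sum_nbij' (fun S => S.erase e) (fun S => insert e S) ?_ ?_ ?_ ?_ ?_ <;>
    intro S hS <;> simp_all [Finset.insert_erase, Finset.erase_insert]

/-- The multilinear extension is affine in each coordinate. -/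
lemma mle_decomp {E : Type*} [Fintype E] [DecidableEq E]
    (f : Finset E → ℝ) (x : E → ℝ) (e : E) :
    mle f x = ∑ S ∈ univ.filter (fun S : Finset E => e ∉ S),
      (∏ a ∈ S, x a) * (∏ a ∈ Sᶜ.erase e, (1 - x a)) *
        (x e * f (insert e S) + (1 - x e) * f S) := by
  rw [mle, mle_sum_split e]
  refine Finset.sum_congr rfl fun S hS => ?_
  simp only [mem_filter, mem_univ, true_and] at hS
  have he : e ∈ Sᶜ := by simpa using hS
  rw [Finset.prod_insert hS, Finset.compl_insert, ← Finset.mul_prod_erase _ _ he]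
  ring

/-- One-coordinate step: increasing a single coordinate increases `mle`. -/
lemma mle_step {E : Type*} [Fintype E] [DecidableEq E]
    (f : Finset E → ℝ) (hf : ∀ S T : Finset E, S ⊆ T → f S ≤ f T)
    (x : E → ℝ) (hx0 : ∀ a, 0 ≤ x a) (hx1 : ∀ a, x a ≤ 1)
    (e : E) (b : ℝ) (hxb : x e ≤ b) :
    mle f x ≤ mle f (Function.update x e b) := by
  rw [mle_decomp f x e, mle_decomp f (Function.update x e b) e]
  refine Finset.sum_le_sum fun S hS => ?_
  simp only [mem_filter, mem_univ, true_and] at hS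
  have h1 : ∏ a ∈ S, Function.update x e b a = ∏ a ∈ S, x a :=
    Finset.prod_congr rfl fun a ha =>
      Function.update_of_ne (by rintro rfl; exact hS ha) _ _
  have h2 : ∏ a ∈ Sᶜ.erase e, (1 - Function.update x e b a)
      = ∏ a ∈ Sᶜ.erase e, (1 - x a) :=
    Finset.prod_congr rfl fun a ha => by
      rw [Function.update_of_ne (Finset.ne_of_mem_erase ha)]
  rw [h1, h2, Function.update_self]
  have hw : 0 ≤ (∏ a ∈ S, x a) * ∏ a ∈ Sᶜ.erase e, (1 - x a) :=
    mul_nonneg (Finset.prod_nonneg fun a _ => hx0 a)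
      (Finset.prod_nonneg fun a _ => by linarith [hx1 a])
  have hm : f S ≤ f (insert e S) := hf _ _ (Finset.subset_insert e S)
  nlinarith [mul_nonneg hw (mul_nonneg (sub_nonneg.2 hxb) (sub_nonneg.2 hm))]

/-- if `f` is monotone then its multilinear extension is monotone
in the componentwise order on `[0,1]^E`. -/
theorem mle_monotone {E : Type*} [Fintype E] [DecidableEq E]
    (f : Finset E → ℝ) (hf : ∀ S T : Finset E, S ⊆ T → f S ≤ f T)
    (x y : E → ℝ)
    (hx0 : ∀ e, 0 ≤ x e) (hx1 : ∀ e, x e ≤ 1)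
    (hy0 : ∀ e, 0 ≤ y e) (hy1 : ∀ e, y e ≤ 1)
    (hxy : ∀ e, x e ≤ y e) :
    mle f x ≤ mle f y := by
  have key : ∀ s : Finset E, mle f x ≤ mle f (fun e => if e ∈ s then y e else x e) := by
    intro s
    induction s using Finset.induction_on with
    | empty => simp
    | @insert a s ha ih =>
        set z : E → ℝ := fun e => if e ∈ s then y e else x e with hz
        have hz0 : ∀ e, 0 ≤ z e := fun e => by by_cases h : e ∈ s <;> simp [hz, h, hx0 e, hy0 e]
        have hz1 : ∀ e, z e ≤ 1 := fun e => by by_cases h : e ∈ s <;> simp [hz, h, hx1 e, hy1 e]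
        have heq : (fun e => if e ∈ insert a s then y e else x e) = Function.update z a (y a) := by
          funext e
          by_cases h : e = a
          · subst h; simp [Function.update_self]
          · simp [Function.update_of_ne h, hz, Finset.mem_insert, h]
        rw [heq]
        refine le_trans ih (mle_step f hf z hz0 hz1 a (y a) ?_)
        simp [hz, ha, hxy a]
  have := key Finset.univ
  simpa using this
end

section
/- If f is a monotone submodular set function, then its multilinear extension F is (1,1)-locally-smooth: for every subset S ⊆ E and every x ∈ [0,1]^E, Σ_{e∈S} ∇_e F(x) ≥ F(1_S) − F(x), i.e., F(x) + Σ_{e∈S} ∇_e F(x) ≥ f(S). -/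
open Finset

/-- A set function `f : 2^E → ℝ` is submodular if
`f(S ∪ {e}) − f(S) ≥ f(T ∪ {e}) − f(T)` for all `S ⊆ T ⊆ E` and `e ∉ T`. -/
def SubmodularFn {E : Type*} [DecidableEq E] (f : Finset E → ℝ) : Prop :=
  ∀ S T : Finset E, S ⊆ T → ∀ e, e ∉ T →
    f (insert e S) - f S ≥ f (insert e T) - f T

section Aux

variable {E : Type*} [Fintype E] [DecidableEq E]

/-- The probability weight of the random set `R` when each element is included
independently with probability `x e`. -/
noncomputable def wgt (x : E → ℝ) (R : Finset E) : ℝ :=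
  (∏ e ∈ R, x e) * ∏ e ∈ Rᶜ, (1 - x e)

lemma wgt_nonneg (x : E → ℝ) (hx0 : ∀ e, 0 ≤ x e) (hx1 : ∀ e, x e ≤ 1)
    (R : Finset E) : 0 ≤ wgt x R :=
  mul_nonneg (prod_nonneg fun e _ => hx0 e)
    (prod_nonneg fun e _ => by linarith [hx1 e])

lemma wgt_sum_one (x : E → ℝ) : ∑ R : Finset E, wgt x R = 1 := by
  have h := Finset.prod_add (fun e : E => x e) (fun e : E => 1 - x e) (univ : Finset E)
  simp only [add_sub_cancel, prod_const_one, Finset.powerset_univ] at h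
  rw [h]
  exact Finset.sum_congr rfl fun R _ => by simp [wgt, Finset.compl_eq_univ_sdiff]

lemma mle_eq_wgt (f : Finset E → ℝ) (x : E → ℝ) :
    mle f x = ∑ R : Finset E, wgt x R * f R := rfl

lemma sum_mem_reindex (e : E) (g : Finset E → ℝ) :
    ∑ R ∈ univ.filter (fun R : Finset E => e ∈ R), g R
      = ∑ R ∈ univ.filter (fun R : Finset E => e ∉ R), g (insert e R) := by
  refine Finset.sum_nbij' (fun R => R.erase e) (fun R => insert e R) ?_ ?_ ?_ ?_ ?_
  · intro R hR; simp
  · intro R hR; simp at hR ⊢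
  · intro R hR; simp at hR; exact insert_erase hR
  · intro R hR; simp at hR; exact erase_insert hR
  · intro R hR; simp at hR; rw [insert_erase hR]

lemma split_sum (e : E) (g : Finset E → ℝ) :
    ∑ R : Finset E, g R
      = ∑ R ∈ univ.filter (fun R : Finset E => e ∉ R), (g R + g (insert e R)) := by
  rw [← Finset.sum_filter_add_sum_filter_not univ (fun R : Finset E => e ∈ R) g,
    Finset.sum_add_distrib, sum_mem_reindex e g, add_comm]

lemma mle_update_one (f : Finset E → ℝ) (x : E → ℝ) (e : E) :
    mle f (Function.update x e 1) = ∑ R : Finset E, wgt x R * f (insert e R) := by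
  rw [mle_eq_wgt, split_sum e, split_sum e (fun R => wgt x R * f (insert e R))]
  apply sum_congr rfl
  intro R hR
  simp only [mem_filter, mem_univ, true_and] at hR
  have hcompl : e ∈ Rᶜ := mem_compl.mpr hR
  have hP : ∏ e' ∈ R, Function.update x e 1 e' = ∏ e' ∈ R, x e' :=
    prod_congr rfl fun a ha => Function.update_of_ne (by rintro rfl; exact hR ha) _ _
  have hC0 : ∏ e' ∈ Rᶜ, (1 - Function.update x e 1 e') = 0 :=
    prod_eq_zero hcompl (by simp)
  have hPins : ∏ e' ∈ insert e R, Function.update x e 1 e' = ∏ e' ∈ R, x e' := by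
    rw [prod_insert hR, Function.update_self, one_mul, hP]
  have hQins : ∏ e' ∈ (insert e R)ᶜ, (1 - Function.update x e 1 e')
      = ∏ e' ∈ (insert e R)ᶜ, (1 - x e') :=
    prod_congr rfl fun a ha => by
      rw [Function.update_of_ne (by rintro rfl; exact (mem_compl.mp ha) (mem_insert_self a R)) _ _]
  have hRc : ∏ e' ∈ Rᶜ, (1 - x e')
      = (1 - x e) * ∏ e' ∈ (insert e R)ᶜ, (1 - x e') := by
    rw [Finset.compl_insert]
    exact (Finset.mul_prod_erase _ _ hcompl).symm
  have hxins : ∏ e' ∈ insert e R, x e' = x e * ∏ e' ∈ R, x e' := prod_insert hR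
  have hii : insert e (insert e R) = insert e R := Finset.insert_idem e R
  simp only [wgt, hP, hC0, hPins, hQins, hRc, hxins, hii]
  ring

lemma mle_update_zero (f : Finset E → ℝ) (x : E → ℝ) (e : E) :
    mle f (Function.update x e 0) = ∑ R : Finset E, wgt x R * f (R.erase e) := by
  rw [mle_eq_wgt, split_sum e, split_sum e (fun R => wgt x R * f (R.erase e))]
  apply sum_congr rfl
  intro R hR
  simp only [mem_filter, mem_univ, true_and] at hR
  have hcompl : e ∈ Rᶜ := mem_compl.mpr hR
  have hP : ∏ e' ∈ R, Function.update x e 0 e' = ∏ e' ∈ R, x e' :=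
    prod_congr rfl fun a ha => Function.update_of_ne (by rintro rfl; exact hR ha) _ _
  have hPins0 : ∏ e' ∈ insert e R, Function.update x e 0 e' = 0 :=
    prod_eq_zero (mem_insert_self e R) (by simp)
  have hC : ∏ e' ∈ Rᶜ, (1 - Function.update x e 0 e')
      = ∏ e' ∈ (insert e R)ᶜ, (1 - x e') := by
    rw [← Finset.mul_prod_erase _ _ hcompl, Function.update_self, Finset.compl_insert]
    have : ∏ e' ∈ Rᶜ.erase e, (1 - Function.update x e 0 e')
        = ∏ e' ∈ Rᶜ.erase e, (1 - x e') :=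
      prod_congr rfl fun a ha => by
        rw [Function.update_of_ne (Finset.ne_of_mem_erase ha) _ _]
    rw [this]; ring
  have hRc : ∏ e' ∈ Rᶜ, (1 - x e')
      = (1 - x e) * ∏ e' ∈ (insert e R)ᶜ, (1 - x e') := by
    rw [Finset.compl_insert]
    exact (Finset.mul_prod_erase _ _ hcompl).symm
  have hxins : ∏ e' ∈ insert e R, x e' = x e * ∏ e' ∈ R, x e' := prod_insert hR
  have he1 : R.erase e = R := erase_eq_of_notMem hR
  have he2 : (insert e R).erase e = R := erase_insert hR
  simp only [wgt, hP, hPins0, hC, hRc, hxins, he1, he2]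
  ring

lemma wgt_indic (S R : Finset E) : wgt (indic S) R = if R = S then 1 else 0 := by
  by_cases h : R = S
  · subst h
    have h1 : ∏ a ∈ R, indic R a = 1 := prod_eq_one fun a ha => by simp [indic, ha]
    have h2 : ∏ a ∈ Rᶜ, (1 - indic R a) = 1 :=
      prod_eq_one fun a ha => by simp [indic, mem_compl.mp ha]
    simp [wgt, h1, h2]
  · rw [if_neg h]
    by_cases hRS : R ⊆ S
    · have hSR : ¬ S ⊆ R := fun hh => h (Finset.Subset.antisymm hRS hh)
      obtain ⟨a, haS, haR⟩ := Finset.not_subset.mp hSR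
      exact mul_eq_zero.mpr (Or.inr (prod_eq_zero (mem_compl.mpr haR) (by simp [indic, haS])))
    · obtain ⟨a, haR, haS⟩ := Finset.not_subset.mp hRS
      exact mul_eq_zero.mpr (Or.inl (prod_eq_zero haR (by simp [indic, haS])))

lemma mle_indic (f : Finset E → ℝ) (S : Finset E) : mle f (indic S) = f S := by
  rw [mle_eq_wgt]
  simp only [wgt_indic, ite_mul, one_mul, zero_mul]
  simp

omit [Fintype E] in
lemma pointwise_marg (f : Finset E → ℝ)
    (hsub : SubmodularFn f) (R : Finset E) (T : Finset E) :
    f (R ∪ T) ≤ f R + ∑ e ∈ T \ R, (f (insert e R) - f R) := by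
  induction T using Finset.induction_on with
  | empty => simp
  | @insert a T ha ih =>
    by_cases haR : a ∈ R
    · have h1 : R ∪ insert a T = R ∪ T := by
        rw [Finset.union_insert, insert_eq_self.mpr (mem_union_left T haR)]
      have h2 : insert a T \ R = T \ R := Finset.insert_sdiff_of_mem T haR
      rw [h1, h2]; exact ih
    · have hnotRT : a ∉ R ∪ T := by simp [haR, ha]
      have hsubm := hsub R (R ∪ T) Finset.subset_union_left a hnotRT
      have h1 : R ∪ insert a T = insert a (R ∪ T) := by rw [Finset.union_insert]
      have h2 : insert a T \ R = insert a (T \ R) := Finset.insert_sdiff_of_notMem T haR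
      have h3 : a ∉ T \ R := fun hh => ha (mem_sdiff.mp hh).1
      rw [h1, h2, sum_insert h3]
      linarith

omit [Fintype E] in
lemma pointwise_key (f : Finset E → ℝ)
    (hmono : ∀ S T : Finset E, S ⊆ T → f S ≤ f T)
    (hsub : SubmodularFn f) (S R : Finset E) :
    f S ≤ f R + ∑ e ∈ S, (f (insert e R) - f (R.erase e)) := by
  have h1 : f S ≤ f (R ∪ S) := hmono _ _ Finset.subset_union_right
  have h2 := pointwise_marg f hsub R S
  have h3 : ∑ e ∈ S \ R, (f (insert e R) - f R)
      = ∑ e ∈ S \ R, (f (insert e R) - f (R.erase e)) :=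
    sum_congr rfl fun a ha => by
      rw [erase_eq_of_notMem (mem_sdiff.mp ha).2]
  have h4 : ∑ e ∈ S \ R, (f (insert e R) - f (R.erase e))
      ≤ ∑ e ∈ S, (f (insert e R) - f (R.erase e)) := by
    apply Finset.sum_le_sum_of_subset_of_nonneg Finset.sdiff_subset
    intro a haS hna
    have haR : a ∈ R := by
      by_contra hc; exact hna (mem_sdiff.mpr ⟨haS, hc⟩)
    have hins : insert a R = R := insert_eq_self.mpr haR
    rw [hins]
    have := hmono (R.erase a) R (erase_subset a R)
    linarith
  linarith

end Aux

/-- the multilinear extension of a monotone submodular function is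
`(1,1)`-locally-smooth: `Σ_{e∈S} ∇_e F(x) ≥ F(1_S) − F(x)` for every `S ⊆ E` and
`x ∈ [0,1]^E`. -/
theorem mle_one_one_locally_smooth {E : Type*} [Fintype E] [DecidableEq E]
    (f : Finset E → ℝ)
    (hmono : ∀ S T : Finset E, S ⊆ T → f S ≤ f T)
    (hsub : SubmodularFn f)
    (S : Finset E) (x : E → ℝ)
    (hx0 : ∀ e, 0 ≤ x e) (hx1 : ∀ e, x e ≤ 1) :
    ∑ e ∈ S, mleGrad f x e ≥ mle f (indic S) - mle f x := by
  rw [mle_indic]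
  have hgrad : ∀ e : E, mleGrad f x e
      = ∑ R : Finset E, wgt x R * (f (insert e R) - f (R.erase e)) := by
    intro e
    rw [mleGrad, mle_update_one, mle_update_zero, ← Finset.sum_sub_distrib]
    exact sum_congr rfl fun R _ => by ring
  have hsum : ∑ e ∈ S, mleGrad f x e
      = ∑ R : Finset E, wgt x R * ∑ e ∈ S, (f (insert e R) - f (R.erase e)) := by
    simp only [hgrad]
    rw [Finset.sum_comm]
    exact sum_congr rfl fun R _ => by rw [Finset.mul_sum]
  have hkey : ∑ R : Finset E, wgt x R * f S
      ≤ ∑ R : Finset E, wgt x R * (f R + ∑ e ∈ S, (f (insert e R) - f (R.erase e))) := by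
    apply Finset.sum_le_sum
    intro R _
    exact mul_le_mul_of_nonneg_left (pointwise_key f hmono hsub S R)
      (wgt_nonneg x hx0 hx1 R)
  have hfS : ∑ R : Finset E, wgt x R * f S = f S := by
    rw [← Finset.sum_mul, wgt_sum_one, one_mul]
  have hrhs : ∑ R : Finset E, wgt x R * (f R + ∑ e ∈ S, (f (insert e R) - f (R.erase e)))
      = mle f x + ∑ e ∈ S, mleGrad f x e := by
    rw [hsum, mle_eq_wgt, ← Finset.sum_add_distrib]
    exact sum_congr rfl fun R _ => by ring
  rw [hfS, hrhs] at hkey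
  linarith
end

section
/- If f is a submodular set function, then its multilinear extension F is concave in every positive direction: for all x, y ∈ [0,1]^E with x_e ≤ y_e for every e, and every e ∈ E, one has ∇_e F(x) ≥ ∇_e F(y). -/
open Finset

lemma mle_update {E : Type*} [Fintype E] [DecidableEq E]
    (g : Finset E → ℝ) (z : E → ℝ) (a : E) (t : ℝ) :
    mle g (Function.update z a t) =
      ∑ S ∈ univ.filter (fun S : Finset E => a ∉ S),
        (∏ e ∈ S, z e) * (∏ e ∈ Sᶜ.erase a, (1 - z e)) *
          ((1 - t) * g S + t * g (insert a S)) := by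
  unfold mle
  rw [← Finset.sum_filter_add_sum_filter_not univ (fun S : Finset E => a ∉ S)]
  have h1 : ∑ S ∈ univ.filter (fun S : Finset E => a ∉ S),
      (∏ e ∈ S, Function.update z a t e) * (∏ e ∈ Sᶜ, (1 - Function.update z a t e)) * g S =
      ∑ S ∈ univ.filter (fun S : Finset E => a ∉ S),
        (∏ e ∈ S, z e) * (∏ e ∈ Sᶜ.erase a, (1 - z e)) * ((1 - t) * g S) := by
    apply Finset.sum_congr rfl
    intro S hS
    have ha : a ∉ S := (mem_filter.1 hS).2
    have hac : a ∈ Sᶜ := mem_compl.2 ha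
    have e1 : ∏ e ∈ S, Function.update z a t e = ∏ e ∈ S, z e := by
      apply Finset.prod_congr rfl
      intro b hb
      exact Function.update_of_ne (by rintro rfl; exact ha hb) _ _
    have e2 : ∏ e ∈ Sᶜ, (1 - Function.update z a t e) =
        (1 - t) * ∏ e ∈ Sᶜ.erase a, (1 - z e) := by
      rw [← Finset.mul_prod_erase _ _ hac, Function.update_self]
      congr 1
      apply Finset.prod_congr rfl
      intro b hb
      rw [Function.update_of_ne (Finset.ne_of_mem_erase hb)]
    rw [e1, e2]; ring
  have h2 : ∑ S ∈ univ.filter (fun S : Finset E => ¬ a ∉ S),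
      (∏ e ∈ S, Function.update z a t e) * (∏ e ∈ Sᶜ, (1 - Function.update z a t e)) * g S =
      ∑ S ∈ univ.filter (fun S : Finset E => a ∉ S),
        (∏ e ∈ S, z e) * (∏ e ∈ Sᶜ.erase a, (1 - z e)) * (t * g (insert a S)) := by
    apply Finset.sum_nbij' (fun S => S.erase a) (fun S => insert a S)
    · intro S hS
      simp only [mem_filter, mem_univ, true_and] at *
      exact notMem_erase _ _
    · intro S hS
      simp only [mem_filter, mem_univ, true_and, not_not] at *
      exact mem_insert_self _ _
    · intro S hS
      simp only [mem_filter, mem_univ, true_and, not_not] at hS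
      exact Finset.insert_erase hS
    · intro S hS
      simp only [mem_filter, mem_univ, true_and] at hS
      exact Finset.erase_insert hS
    · intro S hS
      simp only [mem_filter, mem_univ, true_and, not_not] at hS
      have e0 : insert a (S.erase a) = S := Finset.insert_erase hS
      have e1 : ∏ e ∈ S, Function.update z a t e = t * ∏ e ∈ S.erase a, z e := by
        rw [← Finset.mul_prod_erase _ _ hS, Function.update_self]
        congr 1
        apply Finset.prod_congr rfl
        intro b hb
        rw [Function.update_of_ne (Finset.ne_of_mem_erase hb)]
      have hac : a ∉ Sᶜ := by simp [hS]
      have e2 : ∏ e ∈ Sᶜ, (1 - Function.update z a t e) =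
          ∏ e ∈ (S.erase a)ᶜ.erase a, (1 - z e) := by
        have : (S.erase a)ᶜ.erase a = Sᶜ := by
          rw [Finset.compl_erase, Finset.erase_insert hac]
        rw [this]
        apply Finset.prod_congr rfl
        intro b hb
        rw [Function.update_of_ne (by rintro rfl; exact hac hb)]
      rw [e1, e2, e0]; ring
  rw [h1, h2, ← Finset.sum_add_distrib]
  apply Finset.sum_congr rfl
  intro S _
  ring

lemma mle_update_mono {E : Type*} [Fintype E] [DecidableEq E]
    (g : Finset E → ℝ) (hg : ∀ S T : Finset E, S ⊆ T → g T ≤ g S)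
    (z : E → ℝ) (hz0 : ∀ e, 0 ≤ z e) (hz1 : ∀ e, z e ≤ 1)
    (a : E) {s t : ℝ} (hst : s ≤ t) :
    mle g (Function.update z a t) ≤ mle g (Function.update z a s) := by
  rw [mle_update, mle_update]
  apply Finset.sum_le_sum
  intro S hS
  have hW : 0 ≤ (∏ e ∈ S, z e) * (∏ e ∈ Sᶜ.erase a, (1 - z e)) := by
    apply mul_nonneg
    · exact Finset.prod_nonneg fun e _ => hz0 e
    · exact Finset.prod_nonneg fun e _ => by linarith [hz1 e]
  have hg' : g (insert a S) ≤ g S := hg S _ (Finset.subset_insert a S)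
  nlinarith [mul_nonneg (mul_nonneg hW (sub_nonneg.2 hst)) (sub_nonneg.2 hg')]

lemma mle_anti {E : Type*} [Fintype E] [DecidableEq E]
    (g : Finset E → ℝ) (hg : ∀ S T : Finset E, S ⊆ T → g T ≤ g S)
    (x y : E → ℝ)
    (hx0 : ∀ e, 0 ≤ x e) (hx1 : ∀ e, x e ≤ 1)
    (hy0 : ∀ e, 0 ≤ y e) (hy1 : ∀ e, y e ≤ 1)
    (hxy : ∀ e, x e ≤ y e) :
    mle g y ≤ mle g x := by
  have key : ∀ s : Finset E, mle g (fun b => if b ∈ s then y b else x b) ≤ mle g x := by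
    intro s
    induction s using Finset.induction_on with
    | empty => simp
    | @insert a s ha ih =>
      set z : E → ℝ := fun b => if b ∈ s then y b else x b with hz
      have hz0 : ∀ e, 0 ≤ z e := fun e => by by_cases h : e ∈ s <;> simp [hz, h, hx0 e, hy0 e]
      have hz1 : ∀ e, z e ≤ 1 := fun e => by by_cases h : e ∈ s <;> simp [hz, h, hx1 e, hy1 e]
      have e1 : (fun b => if b ∈ insert a s then y b else x b) = Function.update z a (y a) := by
        funext b
        by_cases h : b = a
        · subst h; simp [hz, Function.update_self]
        · rw [Function.update_of_ne h]
          simp [hz, Finset.mem_insert, h]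
      have e2 : z = Function.update z a (x a) := by
        funext b
        by_cases h : b = a
        · subst h; simp [hz, ha]
        · rw [Function.update_of_ne h]
      calc mle g (fun b => if b ∈ insert a s then y b else x b)
          = mle g (Function.update z a (y a)) := by rw [e1]
        _ ≤ mle g (Function.update z a (x a)) := mle_update_mono g hg z hz0 hz1 a (hxy a)
        _ = mle g z := by rw [← e2]
        _ ≤ mle g x := ih
  have := key Finset.univ
  simpa using this

/-- the multilinear extension of a submodular function is concave in
every positive direction: `∇_e F(x) ≥ ∇_e F(y)` whenever `x ≤ y` in `[0,1]^E`. -/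
theorem mleGrad_antitone {E : Type*} [Fintype E] [DecidableEq E]
    (f : Finset E → ℝ) (hsub : SubmodularFn f)
    (x y : E → ℝ)
    (hx0 : ∀ e, 0 ≤ x e) (hx1 : ∀ e, x e ≤ 1)
    (hy0 : ∀ e, 0 ≤ y e) (hy1 : ∀ e, y e ≤ 1)
    (hxy : ∀ e, x e ≤ y e) (e : E) :
    mleGrad f x e ≥ mleGrad f y e := by
  set g : Finset E → ℝ := fun S => f (insert e S) - f (S.erase e) with hgdef
  have hg : ∀ S T : Finset E, S ⊆ T → g T ≤ g S := by
    intro S T hST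
    have h1 : e ∉ T.erase e := notMem_erase _ _
    have h2 := hsub (S.erase e) (T.erase e) (Finset.erase_subset_erase e hST) e h1
    have eS : insert e (S.erase e) = insert e S := by
      ext b; simp [Finset.mem_insert, Finset.mem_erase]; tauto
    have eT : insert e (T.erase e) = insert e T := by
      ext b; simp [Finset.mem_insert, Finset.mem_erase]; tauto
    rw [eS, eT] at h2
    simp only [hgdef]
    linarith [h2]
  have hgrad : ∀ z : E → ℝ, mleGrad f z e = mle g (Function.update z e 0) := by
    intro z
    rw [mleGrad, mle_update g z e 0, mle_update f z e 1, mle_update f z e 0,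
      ← Finset.sum_sub_distrib]
    apply Finset.sum_congr rfl
    intro S hS
    have heS : e ∉ S := (mem_filter.1 hS).2
    simp only [hgdef]
    rw [Finset.erase_eq_of_notMem heS]
    ring
  rw [ge_iff_le, hgrad x, hgrad y]
  apply mle_anti g hg (Function.update x e 0) (Function.update y e 0)
  · intro b; by_cases h : b = e
    · subst h; simp
    · rw [Function.update_of_ne h]; exact hx0 b
  · intro b; by_cases h : b = e
    · subst h; simp
    · rw [Function.update_of_ne h]; exact hx1 b
  · intro b; by_cases h : b = e
    · subst h; simp
    · rw [Function.update_of_ne h]; exact hy0 b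
  · intro b; by_cases h : b = e
    · subst h; simp
    · rw [Function.update_of_ne h]; exact hy1 b
  · intro b; by_cases h : b = e
    · subst h; simp
    · rw [Function.update_of_ne h, Function.update_of_ne h]; exact hxy b
end

section
/- For the multilinear extension F of a submodular set function f, a first-order upper bound along positive directions holds: for all x, y ∈ [0,1]^E with x_e ≤ y_e for every e ∈ E, F(y) ≤ F(x) + Σ_{e∈E} ∇_e F(x) · (y_e − x_e). -/
open Finset

section Aux

variable {E : Type*} [Fintype E] [DecidableEq E]

lemma mle_split (f : Finset E → ℝ) (x : E → ℝ) (a : E) :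
    mle f x = ∑ T ∈ ((univ : Finset E).erase a).powerset,
      (∏ e ∈ T, x e) * (∏ e ∈ Tᶜ.erase a, (1 - x e)) *
        ((1 - x a) * f T + x a * f (insert a T)) := by
  unfold mle
  rw [show (∑ S : Finset E, (∏ e ∈ S, x e) * (∏ e ∈ Sᶜ, (1 - x e)) * f S)
      = ∑ S ∈ (insert a ((univ : Finset E).erase a)).powerset,
          (∏ e ∈ S, x e) * (∏ e ∈ Sᶜ, (1 - x e)) * f S by
    rw [insert_erase (mem_univ a), powerset_univ]]
  rw [Finset.sum_powerset_insert (notMem_erase a _), ← Finset.sum_add_distrib]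
  refine sum_congr rfl fun T hT => ?_
  have haT : a ∉ T := fun h => (notMem_erase a univ) (mem_powerset.1 hT h)
  have haC : a ∈ Tᶜ := mem_compl.2 haT
  rw [prod_insert haT, compl_insert, ← Finset.mul_prod_erase Tᶜ _ haC]
  ring

lemma mleGrad_formula (f : Finset E → ℝ) (x : E → ℝ) (a : E) :
    mleGrad f x a = ∑ T ∈ ((univ : Finset E).erase a).powerset,
      (∏ e ∈ T, x e) * (∏ e ∈ Tᶜ.erase a, (1 - x e)) * (f (insert a T) - f T) := by
  unfold mleGrad
  rw [mle_split f (Function.update x a 1) a, mle_split f (Function.update x a 0) a,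
    ← Finset.sum_sub_distrib]
  refine sum_congr rfl fun T hT => ?_
  have haT : a ∉ T := fun h => (notMem_erase a univ) (mem_powerset.1 hT h)
  have h1 : ∀ c : ℝ, ∏ e ∈ T, Function.update x a c e = ∏ e ∈ T, x e :=
    fun c => prod_congr rfl fun e he => Function.update_of_ne (ne_of_mem_of_not_mem he haT) _ _
  have h2 : ∀ c : ℝ, ∏ e ∈ Tᶜ.erase a, (1 - Function.update x a c e)
      = ∏ e ∈ Tᶜ.erase a, (1 - x e) :=
    fun c => prod_congr rfl fun e he => by
      rw [Function.update_of_ne (ne_of_mem_erase he) _ _]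
  rw [h1, h1, h2, h2, Function.update_self, Function.update_self]
  ring

lemma mle_decomp_s8 (f : Finset E → ℝ) (x : E → ℝ) (a : E) :
    mle f x = mle f (Function.update x a 0) + x a * mleGrad f x a := by
  rw [mle_split f x a, mle_split f (Function.update x a 0) a, mleGrad_formula,
    Finset.mul_sum, ← Finset.sum_add_distrib]
  refine sum_congr rfl fun T hT => ?_
  have haT : a ∉ T := fun h => (notMem_erase a univ) (mem_powerset.1 hT h)
  have h1 : ∏ e ∈ T, Function.update x a (0:ℝ) e = ∏ e ∈ T, x e :=
    prod_congr rfl fun e he => Function.update_of_ne (ne_of_mem_of_not_mem he haT) _ _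
  have h2 : ∏ e ∈ Tᶜ.erase a, (1 - Function.update x a (0:ℝ) e)
      = ∏ e ∈ Tᶜ.erase a, (1 - x e) :=
    prod_congr rfl fun e he => by rw [Function.update_of_ne (ne_of_mem_erase he) _ _]
  rw [h1, h2, Function.update_self]
  ring

lemma grad_update_self (f : Finset E → ℝ) (x : E → ℝ) (a : E) (t : ℝ) :
    mleGrad f (Function.update x a t) a = mleGrad f x a := by
  unfold mleGrad
  rw [Function.update_idem, Function.update_idem]

lemma mle_affine (f : Finset E → ℝ) (x : E → ℝ) (a : E) (t : ℝ) :
    mle f (Function.update x a t)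
      = mle f (Function.update x a 0) + t * mleGrad f x a := by
  have h := mle_decomp_s8 f (Function.update x a t) a
  rwa [Function.update_idem, Function.update_self, grad_update_self] at h

lemma grad_second (f : Finset E → ℝ) (hsub : SubmodularFn f) (x : E → ℝ)
    (hx0 : ∀ e, 0 ≤ x e) (hx1 : ∀ e, x e ≤ 1) {a b : E} (hab : a ≠ b) :
    mleGrad f (Function.update x a 1) b ≤ mleGrad f (Function.update x a 0) b := by
  rw [mleGrad_formula, mleGrad_formula]
  have hb : a ∈ (univ : Finset E).erase b := mem_erase.2 ⟨hab, mem_univ a⟩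
  rw [show ((univ : Finset E).erase b) = insert a (((univ : Finset E).erase b).erase a)
      from (insert_erase hb).symm]
  rw [Finset.sum_powerset_insert (notMem_erase a _),
    Finset.sum_powerset_insert (notMem_erase a _)]
  have hmem : ∀ T ∈ (((univ : Finset E).erase b).erase a).powerset, a ∉ T ∧ b ∉ T := by
    intro T hT
    have h := mem_powerset.1 hT
    exact ⟨fun hh => (notMem_erase a _) (h hh),
      fun hh => (notMem_erase b _) (mem_of_mem_erase (h hh))⟩
  have hz1 : (∑ T ∈ (((univ : Finset E).erase b).erase a).powerset,
      (∏ e ∈ T, Function.update x a (1:ℝ) e) *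
        (∏ e ∈ Tᶜ.erase b, (1 - Function.update x a (1:ℝ) e)) *
        (f (insert b T) - f T)) = 0 := by
    refine sum_eq_zero fun T hT => ?_
    obtain ⟨haT, hbT⟩ := hmem T hT
    have haTc : a ∈ Tᶜ.erase b := mem_erase.2 ⟨hab, mem_compl.2 haT⟩
    have : (∏ e ∈ Tᶜ.erase b, (1 - Function.update x a (1:ℝ) e)) = 0 :=
      prod_eq_zero haTc (by rw [Function.update_self]; ring)
    rw [this]; ring
  have hz0 : (∑ T ∈ (((univ : Finset E).erase b).erase a).powerset,
      (∏ e ∈ insert a T, Function.update x a (0:ℝ) e) *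
        (∏ e ∈ (insert a T)ᶜ.erase b, (1 - Function.update x a (0:ℝ) e)) *
        (f (insert b (insert a T)) - f (insert a T))) = 0 := by
    refine sum_eq_zero fun T hT => ?_
    obtain ⟨haT, hbT⟩ := hmem T hT
    have : (∏ e ∈ insert a T, Function.update x a (0:ℝ) e) = 0 :=
      prod_eq_zero (mem_insert_self a T) (Function.update_self a 0 x)
    rw [this]; ring
  rw [hz1, hz0]
  have hmain : (∑ T ∈ (((univ : Finset E).erase b).erase a).powerset,
      (∏ e ∈ insert a T, Function.update x a (1:ℝ) e) *
        (∏ e ∈ (insert a T)ᶜ.erase b, (1 - Function.update x a (1:ℝ) e)) *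
        (f (insert b (insert a T)) - f (insert a T)))
      ≤ ∑ T ∈ (((univ : Finset E).erase b).erase a).powerset,
      (∏ e ∈ T, Function.update x a (0:ℝ) e) *
        (∏ e ∈ Tᶜ.erase b, (1 - Function.update x a (0:ℝ) e)) *
        (f (insert b T) - f T) := by
    refine sum_le_sum fun T hT => ?_
    obtain ⟨haT, hbT⟩ := hmem T hT
    -- rewrite LHS coefficient
    have e1 : (∏ e ∈ insert a T, Function.update x a (1:ℝ) e) = ∏ e ∈ T, x e := by
      rw [prod_insert haT, Function.update_self, one_mul]
      exact prod_congr rfl fun e he => Function.update_of_ne (ne_of_mem_of_not_mem he haT) _ _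
    have hsets : (insert a T)ᶜ.erase b = (Tᶜ.erase b).erase a := by
      rw [compl_insert, Finset.erase_right_comm]
    have e2 : (∏ e ∈ (insert a T)ᶜ.erase b, (1 - Function.update x a (1:ℝ) e))
        = ∏ e ∈ (Tᶜ.erase b).erase a, (1 - x e) := by
      rw [hsets]
      exact prod_congr rfl fun e he =>
        by rw [Function.update_of_ne (ne_of_mem_erase he) _ _]
    have e3 : (∏ e ∈ T, Function.update x a (0:ℝ) e) = ∏ e ∈ T, x e :=
      prod_congr rfl fun e he => Function.update_of_ne (ne_of_mem_of_not_mem he haT) _ _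
    have haTc : a ∈ Tᶜ.erase b := mem_erase.2 ⟨hab, mem_compl.2 haT⟩
    have e4 : (∏ e ∈ Tᶜ.erase b, (1 - Function.update x a (0:ℝ) e))
        = ∏ e ∈ (Tᶜ.erase b).erase a, (1 - x e) := by
      rw [← Finset.mul_prod_erase _ _ haTc, Function.update_self, sub_zero, one_mul]
      exact prod_congr rfl fun e he =>
        by rw [Function.update_of_ne (ne_of_mem_erase he) _ _]
    rw [e1, e2, e3, e4]
    have hc : (0:ℝ) ≤ (∏ e ∈ T, x e) * ∏ e ∈ (Tᶜ.erase b).erase a, (1 - x e) :=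
      mul_nonneg (prod_nonneg fun e _ => hx0 e)
        (prod_nonneg fun e _ => by linarith [hx1 e])
    have hbr : f (insert b (insert a T)) - f (insert a T) ≤ f (insert b T) - f T := by
      have := hsub T (insert a T) (subset_insert a T) b
        (by simp only [mem_insert, not_or]; exact ⟨fun h => hab h.symm, hbT⟩)
      linarith
    exact mul_le_mul_of_nonneg_left hbr hc
  linarith

lemma grad_anti_step (f : Finset E → ℝ) (hsub : SubmodularFn f) (w : E → ℝ)
    (hw0 : ∀ e, 0 ≤ w e) (hw1 : ∀ e, w e ≤ 1) {a b : E} (hab : a ≠ b)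
    {t1 t2 : ℝ} (h : t1 ≤ t2) :
    mleGrad f (Function.update w b t2) a ≤ mleGrad f (Function.update w b t1) a := by
  have hexp : ∀ t : ℝ, mleGrad f (Function.update w b t) a =
      (mle f (Function.update (Function.update w a 1) b 0)
        - mle f (Function.update (Function.update w a 0) b 0))
      + t * (mleGrad f (Function.update w a 1) b
        - mleGrad f (Function.update w a 0) b) := by
    intro t
    unfold mleGrad
    rw [Function.update_comm (Ne.symm hab) t (1:ℝ) w,
      Function.update_comm (Ne.symm hab) t (0:ℝ) w,
      mle_affine f (Function.update w a 1) b t,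
      mle_affine f (Function.update w a 0) b t]
    unfold mleGrad
    ring
  rw [hexp t1, hexp t2]
  have hΔ := grad_second f hsub w hw0 hw1 hab
  nlinarith

lemma grad_anti (f : Finset E → ℝ) (hsub : SubmodularFn f) (x z : E → ℝ)
    (hx0 : ∀ e, 0 ≤ x e) (hz1 : ∀ e, z e ≤ 1) (hxz : ∀ e, x e ≤ z e) (a : E) :
    mleGrad f z a ≤ mleGrad f x a := by
  suffices h : ∀ s : Finset E, mleGrad f (s.piecewise z x) a ≤ mleGrad f x a by
    have := h univ
    rwa [Finset.piecewise_univ] at this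
  intro s
  induction s using Finset.induction_on with
  | empty => rw [Finset.piecewise_empty]
  | @insert b s hb IH =>
    rw [Finset.piecewise_insert]
    set w := s.piecewise z x with hw
    have hwb : w b = x b := Finset.piecewise_eq_of_notMem _ _ _ hb
    by_cases hba : b = a
    · subst hba
      rw [grad_update_self]
      exact IH
    · have hw0 : ∀ e, 0 ≤ w e := fun e => by
        by_cases he : e ∈ s
        · rw [hw, Finset.piecewise_eq_of_mem _ _ _ he]; linarith [hx0 e, hxz e]
        · rw [hw, Finset.piecewise_eq_of_notMem _ _ _ he]; exact hx0 e
      have hw1 : ∀ e, w e ≤ 1 := fun e => by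
        by_cases he : e ∈ s
        · rw [hw, Finset.piecewise_eq_of_mem _ _ _ he]; exact hz1 e
        · rw [hw, Finset.piecewise_eq_of_notMem _ _ _ he]; linarith [hxz e, hz1 e]
      have h1 : mleGrad f (Function.update w b (z b)) a
          ≤ mleGrad f (Function.update w b (x b)) a :=
        grad_anti_step f hsub w hw0 hw1 (fun h => hba h.symm) (hxz b)
      rw [← hwb, Function.update_eq_self] at h1
      exact le_trans h1 IH

end Aux

/-- first-order upper bound along positive directions for the
multilinear extension of a submodular function:
`F(y) ≤ F(x) + Σ_e ∇_e F(x)·(y_e − x_e)` whenever `x ≤ y` in `[0,1]^E`. -/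
theorem mle_first_order_upper_bound {E : Type*} [Fintype E] [DecidableEq E]
    (f : Finset E → ℝ) (hsub : SubmodularFn f)
    (x y : E → ℝ)
    (hx0 : ∀ e, 0 ≤ x e) (hx1 : ∀ e, x e ≤ 1)
    (hy0 : ∀ e, 0 ≤ y e) (hy1 : ∀ e, y e ≤ 1)
    (hxy : ∀ e, x e ≤ y e) :
    mle f y ≤ mle f x + ∑ e, mleGrad f x e * (y e - x e) := by
  suffices h : ∀ s : Finset E,
      mle f (s.piecewise y x) ≤ mle f x + ∑ e ∈ s, mleGrad f x e * (y e - x e) by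
    have := h univ
    rwa [Finset.piecewise_univ] at this
  intro s
  induction s using Finset.induction_on with
  | empty => simp [Finset.piecewise_empty]
  | @insert b s hb IH =>
    rw [Finset.piecewise_insert, Finset.sum_insert hb]
    set w := s.piecewise y x with hw
    have hwb : w b = x b := Finset.piecewise_eq_of_notMem _ _ _ hb
    have key : mle f (Function.update w b (y b))
        = mle f w + (y b - x b) * mleGrad f w b := by
      rw [mle_affine f w b (y b)]
      have h2 := mle_decomp_s8 f w b
      rw [hwb] at h2
      linarith
    have hw1 : ∀ e, w e ≤ 1 := fun e => by
      by_cases he : e ∈ s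
      · rw [hw, Finset.piecewise_eq_of_mem _ _ _ he]; exact hy1 e
      · rw [hw, Finset.piecewise_eq_of_notMem _ _ _ he]; exact hx1 e
    have hxw : ∀ e, x e ≤ w e := fun e => by
      by_cases he : e ∈ s
      · rw [hw, Finset.piecewise_eq_of_mem _ _ _ he]; exact hxy e
      · rw [hw, Finset.piecewise_eq_of_notMem _ _ _ he]
    have hgrad : mleGrad f w b ≤ mleGrad f x b :=
      grad_anti f hsub x w hx0 hw1 hxw b
    have hmul : (y b - x b) * mleGrad f w b ≤ (y b - x b) * mleGrad f x b :=
      mul_le_mul_of_nonneg_left hgrad (by linarith [hxy b])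
    rw [key]
    linarith
end

section
/- Scaling loses at most a (1−η) factor for monotone submodular multilinear extensions: if f is a nonnegative monotone submodular set function with multilinear extension F, then for every η with 0 < η ≤ 1 and every u ∈ [0,1]^E, F(u/(1+η)) ≥ (1 − η) · F(u). -/
open Finset

/-- Restricted multilinear sum over subsets of `R`. -/
noncomputable def Hml {E : Type*} [DecidableEq E] (f : Finset E → ℝ) (x : E → ℝ)
    (R : Finset E) : ℝ :=
  ∑ S ∈ R.powerset, (∏ e ∈ S, x e) * (∏ e ∈ R \ S, (1 - x e)) * f S

lemma Hml_insert {E : Type*} [DecidableEq E] (f : Finset E → ℝ) (x : E → ℝ)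
    {R : Finset E} {e : E} (he : e ∉ R) :
    Hml f x (insert e R) =
      x e * Hml (fun S => f (insert e S)) x R + (1 - x e) * Hml f x R := by
  unfold Hml
  rw [Finset.sum_powerset_insert he, Finset.mul_sum, Finset.mul_sum]
  rw [add_comm]
  congr 1
  · apply Finset.sum_congr rfl
    intro S hS
    have hS' : S ⊆ R := Finset.mem_powerset.mp hS
    have heS : e ∉ S := fun h => he (hS' h)
    have hd : insert e R \ insert e S = R \ S := by
      ext a
      simp only [Finset.mem_sdiff, Finset.mem_insert]
      constructor
      · rintro ⟨(rfl | ha), hb⟩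
        · exact absurd (Or.inl rfl) hb
        · exact ⟨ha, fun h => hb (Or.inr h)⟩
      · rintro ⟨ha, hb⟩
        exact ⟨Or.inr ha, fun h => by rcases h with rfl | h; exact he ha; exact hb h⟩
    rw [hd, Finset.prod_insert heS]
    ring
  · apply Finset.sum_congr rfl
    intro S hS
    have hS' : S ⊆ R := Finset.mem_powerset.mp hS
    have heS : e ∉ R \ S := fun h => he (Finset.mem_sdiff.mp h).1
    have hd : insert e R \ S = insert e (R \ S) := by
      rw [Finset.insert_sdiff_of_notMem]
      exact fun h => he (hS' h)
    rw [hd, Finset.prod_insert heS]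
    ring

lemma weight_nonneg {E : Type*} [DecidableEq E] (x : E → ℝ)
    (hx0 : ∀ e, 0 ≤ x e) (hx1 : ∀ e, x e ≤ 1) (S R : Finset E) :
    0 ≤ (∏ e ∈ S, x e) * (∏ e ∈ R \ S, (1 - x e)) :=
  mul_nonneg (Finset.prod_nonneg fun e _ => hx0 e)
    (Finset.prod_nonneg fun e _ => by linarith [hx1 e])

lemma weight_sum {E : Type*} [DecidableEq E] (x : E → ℝ) (R : Finset E) :
    ∑ S ∈ R.powerset, (∏ e ∈ S, x e) * (∏ e ∈ R \ S, (1 - x e)) = 1 := by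
  rw [← Finset.prod_add]
  simp

lemma Hml_nonneg {E : Type*} [DecidableEq E] (f : Finset E → ℝ) (hnn : ∀ S, 0 ≤ f S)
    (x : E → ℝ) (hx0 : ∀ e, 0 ≤ x e) (hx1 : ∀ e, x e ≤ 1) (R : Finset E) :
    0 ≤ Hml f x R :=
  Finset.sum_nonneg fun S _ => mul_nonneg (weight_nonneg x hx0 hx1 S R) (hnn S)

lemma Hml_diff_le {E : Type*} [DecidableEq E] (f : Finset E → ℝ)
    (hsub : SubmodularFn f) (x : E → ℝ) (hx0 : ∀ e, 0 ≤ x e) (hx1 : ∀ e, x e ≤ 1)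
    {R : Finset E} {e : E} (he : e ∉ R) :
    Hml (fun S => f (insert e S)) x R - Hml f x R ≤ f {e} - f ∅ := by
  have key : ∀ S ∈ R.powerset,
      (∏ a ∈ S, x a) * (∏ a ∈ R \ S, (1 - x a)) * f (insert e S)
        - (∏ a ∈ S, x a) * (∏ a ∈ R \ S, (1 - x a)) * f S
      ≤ (∏ a ∈ S, x a) * (∏ a ∈ R \ S, (1 - x a)) * (f {e} - f ∅) := by
    intro S hS
    have hS' : S ⊆ R := Finset.mem_powerset.mp hS
    have heS : e ∉ S := fun h => he (hS' h)
    have h0 := hsub ∅ S (Finset.empty_subset S) e heS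
    have hw := weight_nonneg x hx0 hx1 S R
    have : f (insert e S) - f S ≤ f {e} - f ∅ := by simpa using h0
    nlinarith
  calc Hml (fun S => f (insert e S)) x R - Hml f x R
      = ∑ S ∈ R.powerset, ((∏ a ∈ S, x a) * (∏ a ∈ R \ S, (1 - x a)) * f (insert e S)
        - (∏ a ∈ S, x a) * (∏ a ∈ R \ S, (1 - x a)) * f S) := by
        unfold Hml; rw [Finset.sum_sub_distrib]
    _ ≤ ∑ S ∈ R.powerset, (∏ a ∈ S, x a) * (∏ a ∈ R \ S, (1 - x a)) * (f {e} - f ∅) :=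
        Finset.sum_le_sum key
    _ = f {e} - f ∅ := by rw [← Finset.sum_mul, weight_sum, one_mul]

lemma submod_insert {E : Type*} [DecidableEq E] (f : Finset E → ℝ)
    (hsub : SubmodularFn f) (e : E) :
    SubmodularFn (fun S => f (insert e S)) := by
  intro S T hST e' he'
  by_cases h : e' = e
  · subst h; simp [Finset.insert_idem]
  · have hmem : e' ∉ insert e T := by
      simp only [Finset.mem_insert, not_or]; exact ⟨h, he'⟩
    have := hsub (insert e S) (insert e T) (Finset.insert_subset_insert e hST) e' hmem
    simpa [Finset.insert_comm] using this

lemma Hml_scale {E : Type*} [DecidableEq E] (l : ℝ) (hl0 : 0 ≤ l) (hl1 : l ≤ 1)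
    (u : E → ℝ) (hu0 : ∀ e, 0 ≤ u e) (hu1 : ∀ e, u e ≤ 1) (R : Finset E) :
    ∀ f : Finset E → ℝ, SubmodularFn f →
      Hml f (fun e => l * u e) R ≥ l * Hml f u R + (1 - l) * f ∅ := by
  induction R using Finset.induction_on with
  | empty =>
    intro f _
    simp only [Hml, Finset.powerset_empty, Finset.sum_singleton, Finset.prod_empty,
      Finset.sdiff_empty]
    nlinarith [le_refl (f ∅)]
  | @insert e R he ih =>
    intro f hsub
    have ih1 := ih (fun S => f (insert e S)) (submod_insert f hsub e)
    have ih2 := ih f hsub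
    have hd := Hml_diff_le f hsub u hu0 hu1 he
    rw [Hml_insert _ _ he, Hml_insert _ _ he]
    have hee : insert e (∅ : Finset E) = {e} := by simp
    simp only [hee] at ih1
    have ha0 := hu0 e
    have ha1 := hu1 e
    have hla : l * u e ≤ 1 := mul_le_one₀ hl1 ha0 ha1
    have h1 : 0 ≤ l * u e *
        (Hml (fun S => f (insert e S)) (fun e => l * u e) R
          - (l * Hml (fun S => f (insert e S)) u R + (1 - l) * f {e})) :=
      mul_nonneg (mul_nonneg hl0 ha0) (by linarith [ih1])
    have h2 : 0 ≤ (1 - l * u e) *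
        (Hml f (fun e => l * u e) R - (l * Hml f u R + (1 - l) * f ∅)) :=
      mul_nonneg (by linarith) (by linarith [ih2])
    have h3 : 0 ≤ l * u e * (1 - l) *
        (f {e} - f ∅ - (Hml (fun S => f (insert e S)) u R - Hml f u R)) :=
      mul_nonneg (mul_nonneg (mul_nonneg hl0 ha0) (by linarith)) (by linarith [hd])
    nlinarith [h1, h2, h3]

lemma mle_eq_Hml {E : Type*} [Fintype E] [DecidableEq E]
    (f : Finset E → ℝ) (x : E → ℝ) : mle f x = Hml f x Finset.univ := by
  unfold mle Hml
  rw [Finset.powerset_univ]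
  exact Finset.sum_congr rfl fun S _ => by rw [Finset.compl_eq_univ_sdiff]

/-- for the multilinear extension of a nonnegative monotone
submodular function, scaling by `1/(1+η)` loses at most a `(1−η)` factor:
`F(u/(1+η)) ≥ (1−η)·F(u)` for all `0 < η ≤ 1` and `u ∈ [0,1]^E`. -/
theorem mle_scaling_lower_bound {E : Type*} [Fintype E] [DecidableEq E]
    (f : Finset E → ℝ) (hnn : ∀ S, 0 ≤ f S)
    (hmono : ∀ S T : Finset E, S ⊆ T → f S ≤ f T)
    (hsub : SubmodularFn f)
    (η : ℝ) (hη0 : 0 < η) (hη1 : η ≤ 1)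
    (u : E → ℝ) (hu0 : ∀ e, 0 ≤ u e) (hu1 : ∀ e, u e ≤ 1) :
    mle f (fun e => u e / (1 + η)) ≥ (1 - η) * mle f u := by
  have hpos : (0:ℝ) < 1 + η := by linarith
  set l : ℝ := 1 / (1 + η) with hl
  have hl0 : 0 ≤ l := by positivity
  have hl1 : l ≤ 1 := by
    rw [hl, div_le_one hpos]; linarith
  have hx : (fun e => u e / (1 + η)) = fun e => l * u e := by
    funext e
    rw [hl, one_div, div_eq_mul_inv, mul_comm]
  have key := Hml_scale l hl0 hl1 u hu0 hu1 Finset.univ f hsub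
  have hnonneg : 0 ≤ Hml f u Finset.univ := Hml_nonneg f hnn u hu0 hu1 _
  have hge : l ≥ 1 - η := by
    rw [hl, ge_iff_le, le_div_iff₀ hpos]; nlinarith
  rw [hx, mle_eq_Hml, mle_eq_Hml]
  have hf0 : 0 ≤ f ∅ := hnn ∅
  nlinarith [key, mul_nonneg (sub_nonneg.mpr hge) hnonneg]
end

section
/- Induction step of the dual growth invariant in the ad-auctions algorithm: let B > 0, η > 0, R_max > 0, let C = (1 + R_max)^{η/R_max}, and note C > 1. Let b be a real with 0 < b and b/B ≤ R_max, let s ≥ 0, and let α be a real satisfying α ≥ (1/(C − 1)) · (C^{s/(η B)} − 1). Then α · (1 + b/B) + (b/B) · 1/(C − 1) ≥ (1/(C − 1)) · (C^{(s + b)/(η B)} − 1). -/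
/-- induction step of the dual growth invariant in the
ad-auctions algorithm. With `C = (1 + R_max)^(η/R_max)`, `0 < b`, `b/B ≤ R_max`,
`s ≥ 0` and `α ≥ (1/(C−1))·(C^(s/(ηB)) − 1)`, one has
`α·(1 + b/B) + (b/B)·(1/(C−1)) ≥ (1/(C−1))·(C^((s+b)/(ηB)) − 1)`. -/
theorem ad_auction_dual_growth_step
    (B η Rmax b s α C : ℝ)
    (hB : 0 < B) (hη : 0 < η) (hR : 0 < Rmax)
    (hC : C = (1 + Rmax) ^ (η / Rmax))
    (hb : 0 < b) (hbB : b / B ≤ Rmax) (hs : 0 ≤ s)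
    (hα : α ≥ (1 / (C - 1)) * (C ^ (s / (η * B)) - 1)) :
    α * (1 + b / B) + (b / B) * (1 / (C - 1))
      ≥ (1 / (C - 1)) * (C ^ ((s + b) / (η * B)) - 1) := by
  have hC1 : 1 < C := by
    rw [hC]
    exact (Real.one_lt_rpow_iff_of_pos (by linarith)).2 (Or.inl ⟨by linarith, by positivity⟩)
  have hC0 : 0 < C := by linarith
  have hkey : C ^ (b / (η * B)) ≤ 1 + b / B := by
    rw [hC, ← Real.rpow_mul (by linarith : (0:ℝ) ≤ 1 + Rmax)]
    have he : η / Rmax * (b / (η * B)) = (b / B) / Rmax := by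
      field_simp
    rw [he]
    calc (1 + Rmax) ^ ((b / B) / Rmax)
        ≤ 1 + ((b / B) / Rmax) * Rmax :=
          rpow_one_add_le_one_add_mul_self (by linarith) (by positivity)
            ((div_le_one hR).2 hbB)
      _ = 1 + b / B := by rw [div_mul_cancel₀ _ hR.ne']
  have hsplit : C ^ ((s + b) / (η * B)) = C ^ (s / (η * B)) * C ^ (b / (η * B)) := by
    rw [← Real.rpow_add hC0, ← add_div]
  rw [hsplit]
  set X := C ^ (s / (η * B)) with hX
  set Y := C ^ (b / (η * B)) with hY
  have hX0 : 0 < X := Real.rpow_pos_of_pos hC0 _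
  have hXY : X * Y ≤ X * (1 + b / B) := by
    exact mul_le_mul_of_nonneg_left hkey hX0.le
  have hCm : 0 < C - 1 := by linarith
  have hinv : (C - 1) * (1 / (C - 1)) = 1 := by field_simp
  have hr : 0 < b / B := by positivity
  nlinarith [mul_le_mul_of_nonneg_right (sub_nonneg.2 hα) hr.le,
    mul_pos hCm (by positivity : (0:ℝ) < 1 / (C - 1))]
end

section
/- Grönwall-type invariant for the continuous primal-dual update: let G > 0, λ > 0, d ≥ 1, L > 0, M > 0, c ≥ 0, and 0 < b ≤ M. Suppose α, y : [0,T] → ℝ are differentiable with y'(τ) = 1/(G·L) and α'(τ) ≥ (b/G)·α(τ) + 1/(dλ) for all τ ∈ [0,T], and suppose α(0) ≥ (G/(M·d·λ)) · (exp(L·(c + b·y(0))) − 1). Then for every τ ∈ [0,T], α(τ) ≥ (G/(M·d·λ)) · (exp(L·(c + b·y(τ))) − 1). -/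
/-!
Along the update, `E = exp (L * (c + b * y))` satisfies `E' = (b / G) * E`, so with
`C = G / (M * d * λ)` the gap `φ = α - C * (E - 1)` satisfies
`φ' ≥ (b / G) * φ + 1 / (d * λ) - C * b / G ≥ (b / G) * φ`, the last step because `b ≤ M`.
Grönwall's inequality applied to `-φ` then keeps `φ ≥ 0` on `[0, T]`.
-/

open Set Real

theorem nonneg_of_hasDerivWithinAt_of_mul_le {φ φ' : ℝ → ℝ} {k a b : ℝ}
    (hφ : ∀ x ∈ Icc a b, HasDerivWithinAt φ (φ' x) (Icc a b) x)
    (hgrowth : ∀ x ∈ Ico a b, k * φ x ≤ φ' x) (ha : 0 ≤ φ a) :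
    ∀ x ∈ Icc a b, 0 ≤ φ x := by
  intro x hx
  have hright : ∀ x ∈ Ico a b, HasDerivWithinAt (-φ) (-φ' x) (Ici x) x := fun x hx =>
    (hφ x (Ico_subset_Icc_self hx)).neg.mono_of_mem_nhdsWithin (Icc_mem_nhdsGE_of_mem hx)
  have hbound : -φ x ≤ gronwallBound (-φ a) k 0 (x - a) :=
    le_gronwallBound_of_liminf_deriv_right_le
      (fun y hy => (hφ y hy).continuousWithinAt.neg)
      (fun y hy _ hr => (hright y hy).liminf_right_slope_le hr) le_rfl
      (fun y hy => by simpa using hgrowth y hy) x hx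
  rw [gronwallBound_ε0] at hbound
  nlinarith [exp_pos (k * (x - a))]

theorem hasDerivWithinAt_exp_mul_add_mul {y : ℝ → ℝ} {s : Set ℝ} {x G L b c : ℝ}
    (hL : L ≠ 0) (hy : HasDerivWithinAt y (1 / (G * L)) s x) :
    HasDerivWithinAt (fun x => exp (L * (c + b * y x)))
      (exp (L * (c + b * y x)) * (b / G)) s x := by
  convert (((hy.const_mul b).const_add c).const_mul L).exp using 2
  field_simp

theorem primal_dual_gronwall_invariant_general
    (G lam d L M c b T : ℝ)
    (hG : 0 < G) (hlam : 0 < lam) (hd : 1 ≤ d) (hL : 0 < L) (hM : 0 < M)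
    (hbM : b ≤ M)
    (α y : ℝ → ℝ)
    (hy : ∀ τ ∈ Set.Icc (0 : ℝ) T,
      HasDerivWithinAt y (1 / (G * L)) (Set.Icc (0 : ℝ) T) τ)
    (hα : ∀ τ ∈ Set.Icc (0 : ℝ) T,
      ∃ a : ℝ, HasDerivWithinAt α a (Set.Icc (0 : ℝ) T) τ
        ∧ a ≥ (b / G) * α τ + 1 / (d * lam))
    (h0 : α 0 ≥ (G / (M * d * lam)) * (Real.exp (L * (c + b * y 0)) - 1)) :
    ∀ τ ∈ Set.Icc (0 : ℝ) T,
      α τ ≥ (G / (M * d * lam)) * (Real.exp (L * (c + b * y τ)) - 1) := by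
  choose! α' hα' hα'_ge using hα
  set C := G / (M * d * lam)
  have hCk : C * (b / G) ≤ 1 / (d * lam) := by
    have hdlam : 0 < d * lam := by positivity
    calc C * (b / G) = b / M * (1 / (d * lam)) := by simp only [C]; field_simp
      _ ≤ 1 / (d * lam) := mul_le_of_le_one_left (by positivity) ((div_le_one hM).2 hbM)
  have hgap := nonneg_of_hasDerivWithinAt_of_mul_le (k := b / G)
    (φ := fun x => α x - C * (exp (L * (c + b * y x)) - 1))
    (fun x hx => (hα' x hx).sub
      (((hasDerivWithinAt_exp_mul_add_mul hL.ne' (hy x hx)).sub_const 1).const_mul C))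
    (fun x hx => by linarith [hα'_ge x (Ico_subset_Icc_self hx)]) (by linarith)
  intro τ hτ
  linarith [hgap τ hτ]

/-- Grönwall-type invariant for the continuous primal-dual update.
If on `[0,T]` the coordinate `y` grows at rate `1/(G·L)` and the dual variable
`α` grows at rate at least `(b/G)·α + 1/(d·λ)`, and the invariant
`α ≥ (G/(M·d·λ))·(exp(L·(c + b·y)) − 1)` holds at time `0`, then it holds
throughout `[0,T]`. -/
theorem primal_dual_gronwall_invariant
    (G lam d L M c b T : ℝ)
    (hG : 0 < G) (hlam : 0 < lam) (hd : 1 ≤ d) (hL : 0 < L) (hM : 0 < M)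
    (hc : 0 ≤ c) (hb0 : 0 < b) (hbM : b ≤ M)
    (α y : ℝ → ℝ)
    (hy : ∀ τ ∈ Set.Icc (0 : ℝ) T,
      HasDerivWithinAt y (1 / (G * L)) (Set.Icc (0 : ℝ) T) τ)
    (hα : ∀ τ ∈ Set.Icc (0 : ℝ) T,
      ∃ a : ℝ, HasDerivWithinAt α a (Set.Icc (0 : ℝ) T) τ
        ∧ a ≥ (b / G) * α τ + 1 / (d * lam))
    (h0 : α 0 ≥ (G / (M * d * lam)) * (Real.exp (L * (c + b * y 0)) - 1)) :
    ∀ τ ∈ Set.Icc (0 : ℝ) T,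
      α τ ≥ (G / (M * d * lam)) * (Real.exp (L * (c + b * y τ)) - 1) :=
  primal_dual_gronwall_invariant_general G lam d L M c b T hG hlam hd hL hM hbM α y hy hα h0
end
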